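/- For all n ≥ 4, the maximum product of edge multiplicities over all (n,4,9)-multigraphs equals 2^(ex(n,{C₃,C₄})), i.e., ex_Π(n,4,9) = 2^(ex(n,{C₃,C₄})). -/

import Mathlib

open Finset

def pairs (n : ℕ) (X : Finset (Fin n)) : Finset (Fin n × Fin n) :=
  (X ×ˢ X).filter (fun p => p.1 < p.2)

def mgS (n : ℕ) (w : Fin n → Fin n → ℕ) (X : Finset (Fin n)) : ℕ :=
  ∑ p ∈ pairs n X, w p.1 p.2

def mgP (n : ℕ) (w : Fin n → Fin n → ℕ) (X : Finset (Fin n)) : ℕ :=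
  ∏ p ∈ pairs n X, w p.1 p.2

def IsNSQ (n s q : ℕ) (w : Fin n → Fin n → ℕ) : Prop :=
  ∀ X : Finset (Fin n), X.card = s → mgS n w X ≤ q

def C3C4Free {n : ℕ} (G : SimpleGraph (Fin n)) : Prop :=
  (∀ x y z : Fin n, G.Adj x y → G.Adj y z → G.Adj x z → False) ∧
  (∀ a b c d : Fin n, a ≠ c → b ≠ d →
    G.Adj a b → G.Adj b c → G.Adj c d → G.Adj d a → False)

noncomputable def exC34 (n : ℕ) : ℕ :=
  sSup {m | ∃ G : SimpleGraph (Fin n), C3C4Free G ∧ m = Nat.card G.edgeSet}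

/-!
Doubling the edges of an extremal {C₃, C₄}-free graph gives a (4,9)-graph with product
`2 ^ ex`, since four vertices of a {C₃, C₄}-free graph span at most three edges.

Conversely, let all multiplicities be positive (otherwise the product is 0). If some triangle
has total multiplicity at least 6, or some pair has multiplicity at least 3, then the
4-vertex condition forces multiplicity 1 on every edge leaving it, so it splits off as a block
`B` with product at most `2 ^ |B|`. Strong induction over vertex subsets absorbs such a block,
because `ex (k + j) ≥ ex k + j` (attach pendant vertices) and `ex 5 ≥ 5` (the 5-cycle). If there
is no such block, all multiplicities are at most 2 and the pairs of multiplicity 2 form a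
triangle-free graph with no 4-cycle (four of them among four vertices already weigh 10), so the
product is at most `2 ^ ex`.
-/

open SimpleGraph

section

variable {n : ℕ} {w : Fin n → Fin n → ℕ}

@[simp]
lemma mem_pairs {X : Finset (Fin n)} {p : Fin n × Fin n} :
    p ∈ pairs n X ↔ p.1 ∈ X ∧ p.2 ∈ X ∧ p.1 < p.2 := by
  simp [pairs, and_assoc]

lemma mgP_eq_prod_prod (X : Finset (Fin n)) :
    mgP n w X = ∏ x ∈ X, ∏ y ∈ X, if x < y then w x y else 1 := by
  rw [mgP, pairs, prod_filter, prod_product]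

lemma mgS_eq_sum_sum (X : Finset (Fin n)) :
    mgS n w X = ∑ x ∈ X, ∑ y ∈ X, if x < y then w x y else 0 := by
  rw [mgS, pairs, sum_filter, sum_product]

lemma mgP_union (hsym : ∀ i j, w i j = w j i) {B R : Finset (Fin n)} (h : Disjoint B R) :
    mgP n w (B ∪ R) = mgP n w B * mgP n w R * ∏ b ∈ B, ∏ r ∈ R, w b r := by
  have cross : ∀ b ∈ B, ∀ r ∈ R,
      (if b < r then w b r else 1) * (if r < b then w r b else 1) = w b r := by
    intro b hb r hr
    rcases lt_or_gt_of_ne (fun e : b = r => disjoint_left.mp h hb (e ▸ hr)) with hbr | hrb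
    · simp [hbr, hbr.not_gt]
    · simp [hrb, hrb.not_gt, hsym]
  simp only [mgP_eq_prod_prod, prod_union h, prod_mul_distrib]
  rw [prod_comm (s := R) (t := B), ← prod_congr rfl fun b hb => prod_congr rfl (cross b hb)]
  simp only [prod_mul_distrib]
  ring

lemma mgS_union (hsym : ∀ i j, w i j = w j i) {B R : Finset (Fin n)} (h : Disjoint B R) :
    mgS n w (B ∪ R) = mgS n w B + mgS n w R + ∑ b ∈ B, ∑ r ∈ R, w b r := by
  have cross : ∀ b ∈ B, ∀ r ∈ R,
      (if b < r then w b r else 0) + (if r < b then w r b else 0) = w b r := by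
    intro b hb r hr
    rcases lt_or_gt_of_ne (fun e : b = r => disjoint_left.mp h hb (e ▸ hr)) with hbr | hrb
    · simp [hbr, hbr.not_gt]
    · simp [hrb, hrb.not_gt, hsym]
  simp only [mgS_eq_sum_sum, sum_union h, sum_add_distrib]
  rw [sum_comm (s := R) (t := B), ← sum_congr rfl fun b hb => sum_congr rfl (cross b hb)]
  simp only [sum_add_distrib]
  ring

@[simp]
lemma mgP_singleton (a : Fin n) : mgP n w {a} = 1 := by
  simp [mgP_eq_prod_prod]

@[simp]
lemma mgS_singleton (a : Fin n) : mgS n w {a} = 0 := by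
  simp [mgS_eq_sum_sum]

lemma mgS_insert (hsym : ∀ i j, w i j = w j i) {a : Fin n} {S : Finset (Fin n)} (ha : a ∉ S) :
    mgS n w (insert a S) = ∑ u ∈ S, w a u + mgS n w S := by
  rw [insert_eq, mgS_union hsym (disjoint_singleton_left.mpr ha)]
  simp [add_comm]

lemma mgP_pair (hsym : ∀ i j, w i j = w j i) {a b : Fin n} (hab : a ≠ b) :
    mgP n w {a, b} = w a b := by
  rw [insert_eq, mgP_union hsym (by simpa using hab)]
  simp

lemma mgS_triple (hsym : ∀ i j, w i j = w j i) {a b c : Fin n}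
    (hab : a ≠ b) (hac : a ≠ c) (hbc : b ≠ c) :
    mgS n w {a, b, c} = w a b + w a c + w b c := by
  simp [mgS_insert hsym, *]

lemma mgS_quadruple (hsym : ∀ i j, w i j = w j i) {a b c d : Fin n}
    (hab : a ≠ b) (hac : a ≠ c) (had : a ≠ d) (hbc : b ≠ c) (hbd : b ≠ d) (hcd : c ≠ d) :
    mgS n w {a, b, c, d} = w a b + w a c + w a d + w b c + w b d + w c d := by
  simp [mgS_insert hsym, *]
  ring

lemma mgP_eq_zero {X : Finset (Fin n)} (hsym : ∀ i j, w i j = w j i) {i j : Fin n} (hi : i ∈ X)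
    (hj : j ∈ X) (hij : i ≠ j) (h0 : w i j = 0) : mgP n w X = 0 := by
  rcases lt_or_gt_of_ne hij with h | h
  · exact prod_eq_zero (i := (i, j)) (by simp [hi, hj, h]) h0
  · exact prod_eq_zero (i := (j, i)) (by simp [hi, hj, h]) (hsym j i ▸ h0)

lemma mgP_eq_mul_mgP_sdiff (hsym : ∀ i j, w i j = w j i) {B T : Finset (Fin n)} (hBT : B ⊆ T)
    (hB : ∀ b ∈ B, ∀ r ∈ T \ B, w b r = 1) : mgP n w T = mgP n w B * mgP n w (T \ B) := by
  conv_lhs => rw [← union_sdiff_of_subset hBT]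
  rw [mgP_union hsym disjoint_sdiff, prod_eq_one fun b hb => prod_eq_one (hB b hb), mul_one]


lemma mgP_le_two_pow_mgS_pred {X : Finset (Fin n)} (hpos : ∀ p ∈ pairs n X, 0 < w p.1 p.2) :
    mgP n w X ≤ 2 ^ mgS n (fun i j => w i j - 1) X := by
  rw [mgP, mgS, ← prod_pow_eq_pow_sum]
  refine prod_le_prod' fun p hp => ?_
  have := Nat.lt_two_pow_self (n := w p.1 p.2 - 1)
  have := hpos p hp
  omega

lemma pairs_map {k : ℕ} (f : Fin k ↪o Fin n) (X : Finset (Fin k)) :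
    pairs n (X.map f.toEmbedding) = (pairs k X).map (f.toEmbedding.prodMap f.toEmbedding) := by
  ext ⟨x, y⟩
  simp only [mem_pairs, mem_map, Function.Embedding.prodMap, Prod.exists]
  constructor
  · rintro ⟨⟨i, hi, rfl⟩, ⟨j, hj, rfl⟩, hij⟩
    exact ⟨i, j, ⟨hi, hj, f.lt_iff_lt.mp hij⟩, rfl⟩
  · rintro ⟨i, j, ⟨hi, hj, hij⟩, he⟩
    obtain ⟨rfl, rfl⟩ : f i = x ∧ f j = y := Prod.mk.inj he
    exact ⟨⟨i, hi, rfl⟩, ⟨j, hj, rfl⟩, f.lt_iff_lt.mpr hij⟩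

lemma mgP_map {k : ℕ} (f : Fin k ↪o Fin n) (X : Finset (Fin k)) :
    mgP n w (X.map f.toEmbedding) = mgP k (fun i j => w (f i) (f j)) X := by
  rw [mgP, pairs_map, prod_map]
  rfl

lemma card_filter_adj_pairs (G : SimpleGraph (Fin n)) [DecidableRel G.Adj] :
    #{p ∈ pairs n univ | G.Adj p.1 p.2} = #G.edgeFinset := by
  refine card_nbij (fun p => s(p.1, p.2)) (fun p hp => by simpa using (mem_filter.mp hp).2)
    ?_ ?_
  · rintro ⟨a, b⟩ hab ⟨c, d⟩ hcd he
    simp only [coe_filter, mem_pairs, mem_univ, true_and, Set.mem_ofPred_eq] at hab hcd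
    rcases Sym2.eq_iff.mp he with ⟨rfl, rfl⟩ | ⟨rfl, rfl⟩
    · rfl
    · exact absurd (hab.1.trans hcd.1) (lt_irrefl _)
  · intro e he
    induction e with
    | h u v =>
      have huv : G.Adj u v := by simpa using he
      rcases lt_or_gt_of_ne huv.ne with h | h
      · exact ⟨(u, v), by simp [h, huv], rfl⟩
      · exact ⟨(v, u), by simp [h, huv.symm], Sym2.eq_swap⟩


def doubleWeight (G : SimpleGraph (Fin n)) [DecidableRel G.Adj] : Fin n → Fin n → ℕ :=
  fun i j => if G.Adj i j then 2 else 1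

lemma doubleWeight_symm (G : SimpleGraph (Fin n)) [DecidableRel G.Adj] (i j : Fin n) :
    doubleWeight G i j = doubleWeight G j i := by
  simp [doubleWeight, G.adj_comm]

lemma mgP_doubleWeight (G : SimpleGraph (Fin n)) [DecidableRel G.Adj] :
    mgP n (doubleWeight G) univ = 2 ^ #G.edgeFinset := by
  simp only [mgP, doubleWeight]
  rw [prod_ite, prod_const, prod_const_one, mul_one, card_filter_adj_pairs]

lemma C3C4Free.map_castSucc_sup_edge {k : ℕ} {G : SimpleGraph (Fin k)} (hG : C3C4Free G)
    (i₀ : Fin k) : C3C4Free (G.map Fin.castSuccEmb ⊔ edge (Fin.last k) i₀.castSucc) := by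
  set G' := G.map Fin.castSuccEmb ⊔ edge (Fin.last k) i₀.castSucc
  have adj_castSucc {i j : Fin k} (h : G'.Adj i.castSucc j.castSucc) : G.Adj i j := by
    simp only [G', sup_adj, edge_adj, Fin.castSucc_ne_last, false_and, and_false, or_false] at h
    exact map_adj_apply.mp h
  have adj_last {v : Fin (k + 1)} (h : G'.Adj (Fin.last k) v) : v = i₀.castSucc := by
    simp only [G', sup_adj, map_adj, edge_adj, Fin.castSuccEmb_apply, Fin.castSucc_ne_last,
      and_false, exists_false, false_or, true_and, false_and] at h
    exact h.1.resolve_right fun h' => Fin.castSucc_ne_last i₀ h'.1.symm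
  -- the new vertex has a single neighbour, so it lies on no cycle
  have castSucc_of_adj_adj {u v v' : Fin (k + 1)} (hv : G'.Adj u v) (hv' : G'.Adj u v')
      (hvv' : v ≠ v') : ∃ i, Fin.castSucc i = u := by
    refine Fin.exists_castSucc_eq.mpr fun hu => hvv' ?_
    subst hu
    rw [adj_last hv, adj_last hv']
  refine ⟨fun x y z hxy hyz hxz => ?_, fun a b c d hac hbd h1 h2 h3 h4 => ?_⟩
  · obtain ⟨i, rfl⟩ := castSucc_of_adj_adj hxy hxz hyz.ne
    obtain ⟨j, rfl⟩ := castSucc_of_adj_adj hxy.symm hyz hxz.ne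
    obtain ⟨l, rfl⟩ := castSucc_of_adj_adj hxz.symm hyz.symm hxy.ne
    exact hG.1 i j l (adj_castSucc hxy) (adj_castSucc hyz) (adj_castSucc hxz)
  · obtain ⟨i, rfl⟩ := castSucc_of_adj_adj h1 h4.symm hbd
    obtain ⟨j, rfl⟩ := castSucc_of_adj_adj h1.symm h2 hac
    obtain ⟨l, rfl⟩ := castSucc_of_adj_adj h2.symm h3 hbd
    obtain ⟨m, rfl⟩ := castSucc_of_adj_adj h3.symm h4 hac.symm
    exact hG.2 i j l m (Fin.castSucc_injective _ |>.ne_iff.mp hac)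
      (Fin.castSucc_injective _ |>.ne_iff.mp hbd) (adj_castSucc h1) (adj_castSucc h2)
      (adj_castSucc h3) (adj_castSucc h4)

lemma bddAbove_exC34 (k : ℕ) :
    BddAbove {m | ∃ G : SimpleGraph (Fin k), C3C4Free G ∧ m = Nat.card G.edgeSet} := by
  refine ⟨Nat.card (Sym2 (Fin k)), ?_⟩
  rintro m ⟨G, -, rfl⟩
  exact Finite.card_subtype_le _

lemma card_edgeSet_le_exC34 {k : ℕ} {G : SimpleGraph (Fin k)} (hG : C3C4Free G) :
    Nat.card G.edgeSet ≤ exC34 k :=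
  le_csSup (bddAbove_exC34 k) ⟨G, hG, rfl⟩

lemma exists_card_edgeSet_eq_exC34 (k : ℕ) :
    ∃ G : SimpleGraph (Fin k), C3C4Free G ∧ exC34 k = Nat.card G.edgeSet :=
  Nat.sSup_mem (s := {m | ∃ G : SimpleGraph (Fin k), C3C4Free G ∧ m = Nat.card G.edgeSet})
    ⟨0, ⊥, by simp [C3C4Free]⟩ (bddAbove_exC34 k)

lemma exC34_succ {k : ℕ} (hk : 0 < k) : exC34 k + 1 ≤ exC34 (k + 1) := by
  classical
  obtain ⟨G, hG, hcard⟩ := exists_card_edgeSet_eq_exC34 k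
  have hnew : ¬(G.map Fin.castSuccEmb).Adj (Fin.last k) (Fin.castSucc ⟨0, hk⟩) := by
    simp only [map_adj, Fin.castSuccEmb_apply, Fin.castSucc_ne_last, false_and, and_false,
      exists_false, not_false_eq_true]
  refine le_of_eq_of_le ?_ (card_edgeSet_le_exC34 (hG.map_castSucc_sup_edge ⟨0, hk⟩))
  rw [hcard, Nat.card_eq_fintype_card, Nat.card_eq_fintype_card, ← edgeFinset_card,
    ← edgeFinset_card, card_edgeFinset_sup_edge _ hnew (Fin.castSucc_ne_last _).symm]
  convert congrArg (· + 1) (card_edgeFinset_map Fin.castSuccEmb G).symm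

lemma exC34_add_le {k : ℕ} (hk : 0 < k) (j : ℕ) : exC34 k + j ≤ exC34 (k + j) := by
  induction j with
  | zero => rfl
  | succ j ih => exact (Nat.add_le_add_right ih 1).trans (exC34_succ (by omega))

lemma le_exC34_self {k : ℕ} (hk : 5 ≤ k) : k ≤ exC34 k := by
  have h5 : 5 ≤ exC34 5 := by
    classical
    have hC5 : C3C4Free (cycleGraph 5) := by unfold C3C4Free; decide
    have h := card_edgeSet_le_exC34 hC5
    rwa [Nat.card_eq_card_toFinset, show (cycleGraph 5).edgeSet.toFinset.card = 5 by decide] at h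
  have := exC34_add_le (k := 5) (by norm_num) (k - 5)
  rw [Nat.add_sub_cancel' hk] at this
  omega

lemma C3C4Free.isNSQ_doubleWeight {G : SimpleGraph (Fin n)} [DecidableRel G.Adj]
    (hG : C3C4Free G) : IsNSQ n 4 9 (doubleWeight G) := by
  intro X hX
  obtain ⟨a, b, c, d, hab, hac, had, hbc, hbd, hcd, rfl⟩ := card_eq_four.mp hX
  rw [mgS_quadruple (doubleWeight_symm G) hab hac had hbc hbd hcd]
  obtain ⟨htri, hsq⟩ := hG
  simp only [doubleWeight]
  -- four edges on four vertices always close a triangle or a 4-cycle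
  split_ifs <;> first
    | omega
    | exact (htri a b c ‹_› ‹_› ‹_›).elim
    | exact (htri a b d ‹_› ‹_› ‹_›).elim
    | exact (htri a c d ‹_› ‹_› ‹_›).elim
    | exact (htri b c d ‹_› ‹_› ‹_›).elim
    | exact (hsq a b c d hac hbd ‹_› ‹_› ‹_› (G.adj_symm ‹_›)).elim
    | exact (hsq a b d c had hbc ‹_› ‹_› (G.adj_symm ‹_›) (G.adj_symm ‹_›)).elim
    | exact (hsq a c b d hab hcd ‹_› (G.adj_symm ‹_›) ‹_› (G.adj_symm ‹_›)).elim

structure IsPos49Graph (n : ℕ) (w : Fin n → Fin n → ℕ) : Prop where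
  symm : ∀ i j, w i j = w j i
  pos : ∀ i j, i ≠ j → 0 < w i j
  sum_le : IsNSQ n 4 9 w

namespace IsPos49Graph

lemma sum_six_le (hw : IsPos49Graph n w) {a b c d : Fin n}
    (hab : a ≠ b) (hac : a ≠ c) (had : a ≠ d) (hbc : b ≠ c) (hbd : b ≠ d) (hcd : c ≠ d) :
    w a b + w a c + w a d + w b c + w b d + w c d ≤ 9 := by
  have h := hw.sum_le {a, b, c, d}
    (card_eq_four.mpr ⟨a, b, c, d, hab, hac, had, hbc, hbd, hcd, rfl⟩)
  rwa [mgS_quadruple hw.symm hab hac had hbc hbd hcd] at h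

lemma sum_three_le (hw : IsPos49Graph n w) (hn : 4 ≤ n) {a b c : Fin n}
    (hab : a ≠ b) (hac : a ≠ c) (hbc : b ≠ c) : w a b + w a c + w b c ≤ 6 := by
  obtain ⟨d, -, hd⟩ := exists_mem_notMem_of_card_lt_card (s := {a, b, c}) (t := univ)
    (card_le_three.trans_lt (by simp; omega))
  simp only [mem_insert, mem_singleton, not_or] at hd
  have := hw.sum_six_le hab hac (Ne.symm hd.1) hbc (Ne.symm hd.2.1) (Ne.symm hd.2.2)
  have := hw.pos a d (Ne.symm hd.1)
  have := hw.pos b d (Ne.symm hd.2.1)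
  have := hw.pos c d (Ne.symm hd.2.2)
  omega

lemma mgP_le_two_pow_mgS_pred (hw : IsPos49Graph n w) (X : Finset (Fin n)) :
    mgP n w X ≤ 2 ^ mgS n (fun i j => w i j - 1) X :=
  _root_.mgP_le_two_pow_mgS_pred fun _ hp => hw.pos _ _ (mem_pairs.mp hp).2.2.ne

lemma mgP_le_two_pow_card (hw : IsPos49Graph n w) (hn : 4 ≤ n) {T : Finset (Fin n)}
    (hT : #T ≤ 3) : mgP n w T ≤ 2 ^ #T := by
  have hsym' : ∀ i j, w i j - 1 = w j i - 1 := fun i j => by rw [hw.symm]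
  interval_cases h : #T
  · simp [card_eq_zero.mp h, mgP_eq_prod_prod]
  · obtain ⟨a, rfl⟩ := card_eq_one.mp h
    simp
  · obtain ⟨a, b, hab, rfl⟩ := card_eq_two.mp h
    obtain ⟨c, -, hc⟩ := exists_mem_notMem_of_card_lt_card (s := {a, b}) (t := univ)
      (card_le_two.trans_lt (by simp; omega))
    simp only [mem_insert, mem_singleton, not_or] at hc
    have := hw.sum_three_le hn hab (Ne.symm hc.1) (Ne.symm hc.2)
    have := hw.pos a c (Ne.symm hc.1)
    have := hw.pos b c (Ne.symm hc.2)
    rw [mgP_pair hw.symm hab]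
    omega
  · obtain ⟨a, b, c, hab, hac, hbc, rfl⟩ := card_eq_three.mp h
    refine (hw.mgP_le_two_pow_mgS_pred _).trans (Nat.pow_le_pow_right two_pos ?_)
    simp only [mgS_triple hsym' hab hac hbc]
    have := hw.sum_three_le hn hab hac hbc
    have := hw.pos a b hab
    have := hw.pos a c hac
    have := hw.pos b c hbc
    omega

lemma mgP_le_of_card_eq_four (hw : IsPos49Graph n w) {T : Finset (Fin n)} (hT : #T = 4) :
    mgP n w T ≤ 2 ^ 3 := by
  have hsym' : ∀ i j, w i j - 1 = w j i - 1 := fun i j => by rw [hw.symm]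
  obtain ⟨a, b, c, d, hab, hac, had, hbc, hbd, hcd, rfl⟩ := card_eq_four.mp hT
  refine (hw.mgP_le_two_pow_mgS_pred _).trans (Nat.pow_le_pow_right two_pos ?_)
  simp only [mgS_quadruple hsym' hab hac had hbc hbd hcd]
  have := hw.sum_six_le hab hac had hbc hbd hcd
  have := hw.pos a b hab
  have := hw.pos a c hac
  have := hw.pos a d had
  have := hw.pos b c hbc
  have := hw.pos b d hbd
  have := hw.pos c d hcd
  omega

lemma exists_isolated_block_or_le_two (hw : IsPos49Graph n w) (T : Finset (Fin n)) :
    (∃ B ⊆ T, (#B = 2 ∨ #B = 3) ∧ ∀ b ∈ B, ∀ r ∈ T \ B, w b r = 1) ∨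
    ((∀ u ∈ T, ∀ v ∈ T, u ≠ v → w u v ≤ 2) ∧
      ∀ a ∈ T, ∀ b ∈ T, ∀ c ∈ T, a ≠ b → a ≠ c → b ≠ c → w a b + w a c + w b c < 6) := by
  by_cases htri : ∃ a ∈ T, ∃ b ∈ T, ∃ c ∈ T,
      a ≠ b ∧ a ≠ c ∧ b ≠ c ∧ 6 ≤ w a b + w a c + w b c
  · obtain ⟨a, ha, b, hb, c, hc, hab, hac, hbc, h6⟩ := htri
    refine Or.inl ⟨{a, b, c}, by simp [insert_subset_iff, ha, hb, hc],
      Or.inr (card_eq_three.mpr ⟨a, b, c, hab, hac, hbc, rfl⟩), fun x hx r hr => ?_⟩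
    simp only [mem_sdiff, mem_insert, mem_singleton, not_or] at hx hr
    obtain ⟨-, hra, hrb, hrc⟩ := hr
    have := hw.sum_six_le hab hac (Ne.symm hra) hbc (Ne.symm hrb) (Ne.symm hrc)
    have := hw.pos a r (Ne.symm hra)
    have := hw.pos b r (Ne.symm hrb)
    have := hw.pos c r (Ne.symm hrc)
    rcases hx with rfl | rfl | rfl <;> omega
  push Not at htri
  by_cases hpair : ∃ x ∈ T, ∃ y ∈ T, x ≠ y ∧ 3 ≤ w x y
  · obtain ⟨x, hx, y, hy, hxy, h3⟩ := hpair
    refine Or.inl ⟨{x, y}, by simp [insert_subset_iff, hx, hy], Or.inl (card_pair hxy),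
      fun b hb r hr => ?_⟩
    simp only [mem_sdiff, mem_insert, mem_singleton, not_or] at hb hr
    obtain ⟨hrT, hrx, hry⟩ := hr
    have := htri x hx y hy r hrT hxy (Ne.symm hrx) (Ne.symm hry)
    have := hw.pos x r (Ne.symm hrx)
    have := hw.pos y r (Ne.symm hry)
    rcases hb with rfl | rfl <;> omega
  push Not at hpair
  exact Or.inr ⟨fun u hu v hv huv => Nat.le_of_lt_succ (hpair u hu v hv huv), htri⟩

lemma mgP_le_two_pow_exC34 (hw : IsPos49Graph n w) (T : Finset (Fin n))
    (hle : ∀ u ∈ T, ∀ v ∈ T, u ≠ v → w u v ≤ 2)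
    (htri : ∀ a ∈ T, ∀ b ∈ T, ∀ c ∈ T, a ≠ b → a ≠ c → b ≠ c → w a b + w a c + w b c < 6) :
    mgP n w T ≤ 2 ^ exC34 #T := by
  classical
  set f := T.orderEmbOfFin rfl
  have hf : ∀ i, f i ∈ T := orderEmbOfFin_mem T rfl
  set G : SimpleGraph (Fin #T) := fromRel fun i j => w (f i) (f j) = 2
  have adj_iff (i j) : G.Adj i j ↔ i ≠ j ∧ w (f i) (f j) = 2 := by
    simp [G, hw.symm (f j)]
  have hG : C3C4Free G := by
    refine ⟨fun x y z hxy hyz hxz => ?_, fun a b c d hac hbd h1 h2 h3 h4 => ?_⟩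
    · rw [adj_iff] at hxy hyz hxz
      have := htri _ (hf x) _ (hf y) _ (hf z) (f.injective.ne hxy.1) (f.injective.ne hxz.1)
        (f.injective.ne hyz.1)
      omega
    · rw [adj_iff] at h1 h2 h3 h4
      have := hw.sum_six_le (f.injective.ne h1.1) (f.injective.ne hac) (f.injective.ne h4.1.symm)
        (f.injective.ne h2.1) (f.injective.ne hbd) (f.injective.ne h3.1)
      have := hw.pos _ _ (f.injective.ne hac)
      have := hw.pos _ _ (f.injective.ne hbd)
      rw [hw.symm (f d)] at h4
      omega
  calc mgP n w T = mgP #T (fun i j => w (f i) (f j)) univ := by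
        rw [← mgP_map, map_orderEmbOfFin_univ]
    _ ≤ mgP #T (doubleWeight G) univ := by
        refine prod_le_prod' fun p hp => ?_
        have hp := (mem_pairs.mp hp).2.2.ne
        have := hle _ (hf p.1) _ (hf p.2) (f.injective.ne hp)
        by_cases h : w (f p.1) (f p.2) = 2
        · simp [doubleWeight, adj_iff, hp, h]
        · simp only [doubleWeight, adj_iff, h, and_false, if_false]
          omega
    _ = 2 ^ Nat.card G.edgeSet := by
        rw [mgP_doubleWeight, Nat.card_eq_fintype_card, edgeFinset_card]
    _ ≤ 2 ^ exC34 #T := Nat.pow_le_pow_right two_pos (card_edgeSet_le_exC34 hG)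

end IsPos49Graph

/-- Below 4 vertices the product can exceed `2 ^ exC34 k`: a pair of multiplicity 4, or a
triangle of product 8. -/

noncomputable def exBound (k : ℕ) : ℕ := if k < 4 then k else exC34 k

lemma add_exBound_sub_le {j k : ℕ} (hj : j ≤ 3) (hk : 5 ≤ k) : j + exBound (k - j) ≤ exC34 k := by
  unfold exBound
  split_ifs with h
  · have := le_exC34_self hk
    omega
  · have := exC34_add_le (k := k - j) (by omega) j
    rw [Nat.sub_add_cancel (by omega)] at this
    omega

lemma IsPos49Graph.mgP_le_two_pow_exBound (hw : IsPos49Graph n w) (hn : 4 ≤ n)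
    (T : Finset (Fin n)) : mgP n w T ≤ 2 ^ exBound #T := by
  induction T using Finset.strongInduction with
  | H T ih =>
    obtain hT | hT | hT := lt_trichotomy #T 4
    · simpa [exBound, hT] using hw.mgP_le_two_pow_card hn (by omega : #T ≤ 3)
    · have : exC34 1 + 3 ≤ exC34 4 := exC34_add_le one_pos 3
      rw [exBound, if_neg (by omega), hT]
      exact (hw.mgP_le_of_card_eq_four hT).trans (Nat.pow_le_pow_right two_pos (by omega))
    rw [exBound, if_neg (by omega)]
    obtain ⟨B, hBT, hB, hiso⟩ | ⟨hle, htri⟩ := hw.exists_isolated_block_or_le_two T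
    · have hBne : B.Nonempty := card_pos.mp (by omega)
      calc mgP n w T = mgP n w B * mgP n w (T \ B) := mgP_eq_mul_mgP_sdiff hw.symm hBT hiso
        _ ≤ 2 ^ #B * 2 ^ exBound #(T \ B) :=
            Nat.mul_le_mul (hw.mgP_le_two_pow_card hn (by omega)) (ih _ (sdiff_ssubset hBT hBne))
        _ ≤ 2 ^ exC34 #T := by
            rw [← pow_add, card_sdiff_of_subset hBT]
            exact Nat.pow_le_pow_right two_pos (add_exBound_sub_le (by omega) (by omega))
    · exact hw.mgP_le_two_pow_exC34 T hle htri

end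

theorem exPi_449_eq (n : ℕ) (hn : 4 ≤ n) :
    IsGreatest {m : ℕ | ∃ w : Fin n → Fin n → ℕ,
        (∀ i j, w i j = w j i) ∧ IsNSQ n 4 9 w ∧ m = mgP n w Finset.univ}
      (2 ^ exC34 n) := by
  classical
  refine ⟨?_, ?_⟩
  · obtain ⟨G, hG, hcard⟩ := exists_card_edgeSet_eq_exC34 n
    refine ⟨doubleWeight G, doubleWeight_symm G, hG.isNSQ_doubleWeight, ?_⟩
    rw [mgP_doubleWeight, hcard, Nat.card_eq_fintype_card, SimpleGraph.edgeFinset_card]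
  · rintro m ⟨w, hsym, h49, rfl⟩
    by_cases hpos : ∀ i j, i ≠ j → 0 < w i j
    · simpa [exBound, hn.not_gt] using
        IsPos49Graph.mgP_le_two_pow_exBound ⟨hsym, hpos, h49⟩ hn univ
    · push Not at hpos
      obtain ⟨i, j, hij, h0⟩ := hpos
      simp [mgP_eq_zero hsym (mem_univ i) (mem_univ j) hij (Nat.le_zero.mp h0)]
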